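/- Let D = (V, A) be a directed acyclic graph. The transitive reduction of every acyclic reorientation of D (i.e., of the reoriented graph E_B for every B ∈ AR(D)) is a forest if and only if D is chordful, i.e., the vertex set of every cycle of the underlying undirected graph of D induces a clique (any two distinct vertices of the cycle are joined by an arc of A in one direction or the other). (This is the combinatorial content of the statement that the graphical fan of D is simplicial if and only if D is chordful.) -/

import Mathlib

def ArcRel {V : Type*} (E : Set (V × V)) : V → V → Prop := fun x y => (x, y) ∈ E

/-- `E` has no directed cycle. -/
def AcyclicArcs {V : Type*} (E : Set (V × V)) : Prop :=
  ∀ v : V, ¬ Relation.TransGen (ArcRel E) v v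

/-- `A` is the arc set of a directed acyclic graph: arcs join distinct vertices,
at most one direction between two vertices, and no directed cycle. -/
def IsDAG {V : Type*} (A : Set (V × V)) : Prop :=
  (∀ a ∈ A, a.1 ≠ a.2) ∧ (∀ a ∈ A, Prod.swap a ∉ A) ∧ AcyclicArcs A

/-- Arc set of the reorientation of `A` where exactly the arcs of `B` are reversed. -/
def reorient {V : Type*} (A B : Set (V × V)) : Set (V × V) :=
  (A \ B) ∪ (Prod.swap '' B)

/-- `B` encodes an acyclic reorientation of `A`. -/
def ARmem {V : Type*} (A B : Set (V × V)) : Prop :=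
  B ⊆ A ∧ AcyclicArcs (reorient A B)

/-- The acyclic reorientation poset of `A`, ordered by inclusion of reversed sets. -/
abbrev ARP {V : Type*} (A : Set (V × V)) := {B : Set (V × V) // ARmem A B}

/-- Transitive reduction: delete every arc whose endpoints are joined by a
directed path of length at least 2. -/
def transRed {V : Type*} (E : Set (V × V)) : Set (V × V) :=
  {a ∈ E | ¬ ∃ w : V, ArcRel E a.1 w ∧ Relation.TransGen (ArcRel E) w a.2}

/-- Underlying undirected graph of an arc set. -/
def undirectedGraph {V : Type*} (E : Set (V × V)) : SimpleGraph V :=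
  SimpleGraph.fromRel (fun x y => (x, y) ∈ E)

/-- A directed graph is a forest if its underlying undirected graph has no cycle. -/
def IsForestArcs {V : Type*} (E : Set (V × V)) : Prop :=
  (undirectedGraph E).IsAcyclic

/-- `A` is chordful: the vertex set of every cycle of the underlying undirected
graph induces a clique. -/
def Chordful {V : Type*} (A : Set (V × V)) : Prop :=
  ∀ (v : V) (c : (undirectedGraph A).Walk v v), c.IsCycle →
    ∀ x ∈ c.support, ∀ y ∈ c.support, x ≠ y → ((x, y) ∈ A ∨ (y, x) ∈ A)

/-!
If `D` is chordful, take a cycle in the transitive reduction of an acyclic reorientation `E`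
and a vertex `m` of the cycle that is maximal for `E`. Both cycle-neighbours of `m` send an arc
to `m`; they are adjacent in `D` because the cycle spans a clique, so one of them reaches `m`
through the other and its arc to `m` is not in the reduction.

Conversely, if a cycle of `D` contains two non-adjacent vertices, cutting it along chords gives
a cycle `x = c₀, c₁, …, c_{k-1}` with `k ≥ 4` on which `x` has no chord. Orient `D` along a
numbering with `c₁ < x < c₂ < ⋯ < c_{k-1}` below all other vertices: every edge of this cycle
then survives in the transitive reduction, which is therefore not a forest.
-/

open SimpleGraph Relation

section ArcSets

variable {V : Type*}

@[simp]
theorem undirectedGraph_adj {E : Set (V × V)} {x y : V} :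
    (undirectedGraph E).Adj x y ↔ x ≠ y ∧ ((x, y) ∈ E ∨ (y, x) ∈ E) :=
  SimpleGraph.fromRel_adj _ _ _

theorem undirectedGraph_mono {E F : Set (V × V)} (h : E ⊆ F) :
    undirectedGraph E ≤ undirectedGraph F := fun _ _ hxy => by
  rw [undirectedGraph_adj] at hxy ⊢
  exact ⟨hxy.1, hxy.2.imp (@h _) (@h _)⟩

theorem undirectedGraph_reorient {A B : Set (V × V)} (hB : B ⊆ A) :
    undirectedGraph (reorient A B) = undirectedGraph A := by
  ext x y
  simp only [undirectedGraph_adj, reorient, Set.mem_union, Set.mem_sdiff, Set.mem_image,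
    Prod.exists, Prod.swap_prod_mk, Prod.mk.injEq]
  constructor
  · rintro ⟨hxy, (⟨h, -⟩ | ⟨a, b, h, rfl, rfl⟩) | (⟨h, -⟩ | ⟨a, b, h, rfl, rfl⟩)⟩
    exacts [⟨hxy, .inl h⟩, ⟨hxy, .inr (hB h)⟩, ⟨hxy, .inr h⟩, ⟨hxy, .inl (hB h)⟩]
  · rintro ⟨hxy, h | h⟩
    · by_cases hb : (x, y) ∈ B
      exacts [⟨hxy, .inr (.inr ⟨x, y, hb, rfl, rfl⟩)⟩, ⟨hxy, .inl (.inl ⟨h, hb⟩)⟩]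
    · by_cases hb : (y, x) ∈ B
      exacts [⟨hxy, .inl (.inr ⟨y, x, hb, rfl, rfl⟩)⟩, ⟨hxy, .inr (.inl ⟨h, hb⟩)⟩]

theorem transRed_subset (E : Set (V × V)) : transRed E ⊆ E := fun _ h => h.1

theorem notMem_transRed_of_mem_of_mem {E : Set (V × V)} {a b c : V} (hab : (a, b) ∈ E)
    (hbc : (b, c) ∈ E) : (a, c) ∉ transRed E :=
  fun h => h.2 ⟨b, hab, .single hbc⟩

theorem AcyclicArcs.exists_potential_on {E : Set (V × V)} (hE : AcyclicArcs E) (S : Finset V) :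
    ∃ F : V → ℕ, ∀ u ∈ S, ∀ w, (u, w) ∈ E → F u < F w := by
  classical
  refine ⟨fun w => (S.filter fun u => TransGen (ArcRel E) u w).card, fun u hu w huw => ?_⟩
  refine Finset.card_lt_card (Finset.ssubset_iff_of_subset ?_ |>.2 ⟨u, ?_, ?_⟩)
  · exact Finset.monotone_filter_right _ fun _ _ htu => htu.tail huw
  · simpa [hu] using TransGen.single huw
  · simpa [hu] using hE u

section Potential

variable {α : Type*} [Preorder α] {E : Set (V × V)} {f : V → α}

theorem lt_of_transGen_arcRel (hf : ∀ u w, (u, w) ∈ E → f u < f w) {u w : V}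
    (h : TransGen (ArcRel E) u w) : f u < f w := by
  induction h with
  | single h => exact hf _ _ h
  | tail _ h ih => exact ih.trans (hf _ _ h)

theorem mem_transRed_of_forall_out (hf : ∀ u w, (u, w) ∈ E → f u < f w) {a b : V}
    (hab : (a, b) ∈ E) (h : ∀ w, (a, w) ∈ E → ¬ f w < f b) : (a, b) ∈ transRed E :=
  ⟨hab, fun ⟨w, haw, hwb⟩ => h w haw (lt_of_transGen_arcRel hf hwb)⟩

theorem mem_transRed_of_forall_in (hf : ∀ u w, (u, w) ∈ E → f u < f w) {a b : V}
    (hab : (a, b) ∈ E) (h : ∀ w, (w, b) ∈ E → ¬ f a < f w) : (a, b) ∈ transRed E := by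
  refine ⟨hab, fun ⟨w, haw, hwb⟩ => ?_⟩
  cases hwb with
  | single hwb => exact h w hwb (hf _ _ haw)
  | tail hww' hw'b =>
    exact h _ hw'b ((hf _ _ haw).trans (lt_of_transGen_arcRel hf hww'))

end Potential

end ArcSets

namespace SimpleGraph.Walk

variable {V : Type*} {G H : SimpleGraph V} {x w z : V}

theorem mk_mem_edges_of_length_eq_one {u v : V} {p : G.Walk u v} (h : p.length = 1) :
    s(u, v) ∈ p.edges :=
  (mk_mem_edges_iff_exists p).2 ⟨0, by omega, by rw [zero_add, ← h, getVert_zero, getVert_length]⟩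

theorem edges_subset_edgeSet_of_forall_adj_getVert {u v : V} {p : G.Walk u v}
    (h : ∀ i < p.length, H.Adj (p.getVert i) (p.getVert (i + 1))) :
    ∀ e ∈ p.edges, e ∈ H.edgeSet := by
  intro e he
  induction e using Sym2.ind with
  | _ a b =>
    obtain ⟨i, hi, hab⟩ := (mk_mem_edges_iff_exists p).1 he
    exact hab ▸ h i hi

theorem IsCycle.eq_snd_or_eq_penultimate_of_mem_edges {c : G.Walk x x} (hc : c.IsCycle)
    (h : s(x, w) ∈ c.edges) : w = c.snd ∨ w = c.penultimate := by
  have : w ∈ c.toSubgraph.neighborSet x := adj_toSubgraph_iff_mem_edges.2 h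
  simpa [hc.neighborSet_toSubgraph_endpoint] using this

theorem IsCycle.not_adj_getVert_of_forall_not_isChord {c : G.Walk x x} (hc : c.IsCycle)
    (hx : ∀ w, ¬ c.IsChord s(x, w)) :
    ∀ ⦃j⦄, 2 ≤ j → j ≤ c.length - 2 → ¬ G.Adj x (c.getVert j) := by
  intro j hj hjc hadj
  have hmem : s(x, c.getVert j) ∈ c.edges := by
    by_contra hnot
    exact hx _ (isChord_sym2Mk.2 ⟨hadj, hnot, c.start_mem_support, c.getVert_mem_support j⟩)
  have h3 := hc.three_le_length
  rcases hc.eq_snd_or_eq_penultimate_of_mem_edges hmem with h | h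
  · have := hc.getVert_injOn (by simp only [Set.mem_ofPred_eq]; omega)
      (by simp only [Set.mem_ofPred_eq]; omega) h
    omega
  · have := hc.getVert_injOn (by simp only [Set.mem_ofPred_eq]; omega)
      (by simp only [Set.mem_ofPred_eq]; omega) h
    omega

theorem IsCycle.four_le_length_of_not_adj {c : G.Walk x x} (hc : c.IsCycle) (hz : z ∈ c.support)
    (hzx : z ≠ x) (hxz : ¬ G.Adj x z) : 4 ≤ c.length := by
  obtain ⟨j, rfl, hj⟩ := mem_support_iff_exists_getVert.1 hz
  have h3 := hc.three_le_length
  have hj0 : j ≠ 0 := by rintro rfl; simp at hzx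
  have hjk : j ≠ c.length := by rintro rfl; simp at hzx
  have hj1 : j ≠ 1 := by rintro rfl; exact hxz (c.adj_snd hc.not_nil)
  have hjk1 : j ≠ c.length - 1 := by rintro rfl; exact hxz (c.adj_penultimate hc.not_nil).symm
  omega

theorem IsCycle.exists_isCycle_lt_of_isChord {c : G.Walk x x} (hc : c.IsCycle)
    (hw : c.IsChord s(x, w)) :
    ∃ c₁ c₂ : G.Walk x x, c₁.IsCycle ∧ c₂.IsCycle ∧ c₁.length < c.length ∧
      c₂.length < c.length ∧ ∀ z ∈ c.support, z ∈ c₁.support ∨ z ∈ c₂.support := by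
  classical
  obtain ⟨hxw, hchord, -, hws⟩ := isChord_sym2Mk.1 hw
  have hspec := c.take_spec hws
  set p := c.takeUntil w hws
  set q := c.dropUntil w hws
  have hp : p.IsPath := hc.isPath_takeUntil hws
  have hq : q.IsPath := (hspec ▸ hc).isPath_of_append_right (not_nil_of_ne hxw.ne)
  have hpc : s(x, w) ∉ p.edges := fun h => hchord (c.edges_takeUntil_subset_edges hws h)
  have hqc : s(x, w) ∉ q.edges := fun h => hchord (c.edges_dropUntil_subset_edges hws h)
  have hlen : p.length + q.length = c.length := by rw [← length_append, hspec]
  have hp2 : 2 ≤ p.length := by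
    have : p.length ≠ 0 := fun h => hxw.ne (eq_of_length_eq_zero h)
    have : p.length ≠ 1 := fun h => hpc (mk_mem_edges_of_length_eq_one h)
    omega
  have hq2 : 2 ≤ q.length := by
    have : q.length ≠ 0 := fun h => hxw.ne (eq_of_length_eq_zero h).symm
    have : q.length ≠ 1 := fun h => hqc (Sym2.eq_swap ▸ mk_mem_edges_of_length_eq_one h)
    omega
  refine ⟨cons hxw p.reverse, cons hxw q, ?_, ?_, ?_, ?_, fun z hz => ?_⟩
  · rw [cons_isCycle_iff, edges_reverse, List.mem_reverse]
    exact ⟨hp.reverse, hpc⟩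
  · rw [cons_isCycle_iff]
    exact ⟨hq, hqc⟩
  · simp only [length_cons, length_reverse]; omega
  · simp only [length_cons]; omega
  · rw [← hspec, mem_support_append_iff] at hz
    simpa only [support_cons, support_reverse, List.mem_cons, List.mem_reverse] using
      hz.imp Or.inr Or.inr

theorem IsCycle.exists_isCycle_forall_not_isChord {c : G.Walk x x} (hc : c.IsCycle)
    (hz : z ∈ c.support) (hzx : z ≠ x) (hxz : ¬ G.Adj x z) :
    ∃ (y : V) (d : G.Walk y y), d.IsCycle ∧ 4 ≤ d.length ∧ ∀ w, ¬ d.IsChord s(y, w) := by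
  induction hn : c.length using Nat.strong_induction_on generalizing c with
  | _ n ih =>
    by_cases h : ∃ w, c.IsChord s(x, w)
    · obtain ⟨w, hw⟩ := h
      obtain ⟨c₁, c₂, hc₁, hc₂, hl₁, hl₂, hsupp⟩ := hc.exists_isCycle_lt_of_isChord hw
      rcases hsupp z hz with hz | hz
      · exact ih _ (hn ▸ hl₁) hc₁ hz rfl
      · exact ih _ (hn ▸ hl₂) hc₂ hz rfl
    · exact ⟨x, c, hc, hc.four_le_length_of_not_adj hz hzx hxz, not_exists.1 h⟩

end SimpleGraph.Walk

section Chordful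

variable {V : Type*}

theorem isForestArcs_transRed_of_chordful {A B : Set (V × V)} (hA : Chordful A)
    (hB : ARmem A B) : IsForestArcs (transRed (reorient A B)) := by
  classical
  set E := reorient A B
  intro v c hc
  have hE : undirectedGraph E = undirectedGraph A := undirectedGraph_reorient hB.1
  have hle : undirectedGraph (transRed E) ≤ undirectedGraph A :=
    hE ▸ undirectedGraph_mono (transRed_subset E)
  obtain ⟨F, hF⟩ := hB.2.exists_potential_on c.support.toFinset
  obtain ⟨m, hm, hmax⟩ := c.support.toFinset.exists_max_image F ⟨v, by simp⟩
  rw [List.mem_toFinset] at hm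
  set d := c.rotate m hm
  have hd : d.IsCycle := hc.rotate hm
  have hin : ∀ u ∈ d.support, (undirectedGraph (transRed E)).Adj m u → (u, m) ∈ transRed E := by
    intro u hu hmu
    refine (undirectedGraph_adj.1 hmu).2.resolve_left fun h => ?_
    have hu' : u ∈ c.support.toFinset := by simpa [d] using hu
    exact (hF m (by simpa using hm) u h.1).not_ge (hmax u hu')
  have ha := hin _ (d.getVert_mem_support 1) (d.adj_snd hd.not_nil)
  have hb := hin _ (d.getVert_mem_support _) (d.adj_penultimate hd.not_nil).symm
  have hsupp : d.support = (d.mapLe hle).support := (Walk.support_mapLe_eq_support ..).symm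
  have hab := hA m (d.mapLe hle) ((Walk.isCycle_mapLe hle).2 hd) _
    (hsupp ▸ d.getVert_mem_support 1) _ (hsupp ▸ d.getVert_mem_support _) hd.snd_ne_penultimate
  have hab' : (undirectedGraph E).Adj d.snd d.penultimate := by
    rw [hE, undirectedGraph_adj]; exact ⟨hd.snd_ne_penultimate, hab⟩
  rcases (undirectedGraph_adj.1 hab').2 with h | h
  · exact notMem_transRed_of_mem_of_mem h hb.1 ha
  · exact notMem_transRed_of_mem_of_mem h ha.1 hb

end Chordful

section Orientation

variable {V α : Type*} [LinearOrder α] {A : Set (V × V)} {f : V → α}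

def downArcs (A : Set (V × V)) (f : V → α) : Set (V × V) := {a ∈ A | f a.2 < f a.1}

theorem mem_reorient_downArcs (hA : ∀ a ∈ A, a.1 ≠ a.2) (hf : Function.Injective f) {u v : V} :
    (u, v) ∈ reorient A (downArcs A f) ↔ (undirectedGraph A).Adj u v ∧ f u < f v := by
  constructor
  · rintro (⟨huv, hkeep⟩ | ⟨⟨a, b⟩, ⟨hab, hlt⟩, heq⟩)
    · have hne := hA _ huv
      refine ⟨undirectedGraph_adj.2 ⟨hne, .inl huv⟩, lt_of_le_of_ne ?_ (hf.ne hne)⟩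
      exact not_lt.1 fun h => hkeep ⟨huv, h⟩
    · obtain ⟨rfl, rfl⟩ := Prod.mk.inj heq
      exact ⟨undirectedGraph_adj.2 ⟨(hA _ hab).symm, .inr hab⟩, hlt⟩
  · rintro ⟨huv, hlt⟩
    rcases (undirectedGraph_adj.1 huv).2 with h | h
    · exact .inl ⟨h, fun hd => hd.2.asymm hlt⟩
    · exact .inr ⟨(v, u), ⟨h, hlt⟩, rfl⟩

theorem armem_downArcs (hA : ∀ a ∈ A, a.1 ≠ a.2) (hf : Function.Injective f) :
    ARmem A (downArcs A f) :=
  ⟨fun _ ha => ha.1, fun _ h => lt_irrefl _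
    (lt_of_transGen_arcRel (fun _ _ h => ((mem_reorient_downArcs hA hf).1 h).2) h)⟩

end Orientation

section Numbering

variable {V : Type*} [Fintype V]

theorem exists_injective_nat_of_injOn {s : ℕ → V} {k : ℕ} (hs : Set.InjOn s (Set.Iio k)) :
    ∃ f : V → ℕ, Function.Injective f ∧ (∀ i < k, f (s i) = i) ∧ ∀ v, f v < k → s (f v) = v := by
  classical
  let f : V → ℕ := fun v => if h : ∃ i < k, s i = v then Nat.find h else k + Fintype.equivFin V v
  have hsf : ∀ v, f v < k → s (f v) = v := by
    intro v hv
    by_cases h : ∃ i < k, s i = v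
    · simp only [f, dif_pos h]; exact (Nat.find_spec h).2
    · simp only [f, dif_neg h] at hv; omega
  have hlt : ∀ i < k, f (s i) < k := by
    intro i hi
    have h : ∃ j < k, s j = s i := ⟨i, hi, rfl⟩
    simp only [f, dif_pos h]; exact (Nat.find_spec h).1
  have hge : ∀ v, k ≤ f v → f v = k + Fintype.equivFin V v := by
    intro v hv
    by_cases h : ∃ i < k, s i = v
    · obtain ⟨i, hi, rfl⟩ := h; exact absurd (hlt i hi) hv.not_gt
    · simp only [f, dif_neg h]
  refine ⟨f, fun a b hab => ?_, fun i hi => hs (hlt i hi) hi (hsf _ (hlt i hi)), hsf⟩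
  by_cases ha : f a < k
  · rw [← hsf a ha, ← hsf b (hab ▸ ha), hab]
  · have ha' := hge a (not_lt.1 ha)
    have hb' := hge b (hab ▸ not_lt.1 ha)
    exact (Fintype.equivFin V).injective (Fin.ext (by omega))

theorem SimpleGraph.Walk.IsCycle.exists_injective_nat_numbering {G : SimpleGraph V} {x : V}
    {c : G.Walk x x} (hc : c.IsCycle) :
    ∃ f : V → ℕ, Function.Injective f ∧ f (c.getVert 1) = 0 ∧ f x = 1 ∧
      (∀ i, 2 ≤ i → i < c.length → f (c.getVert i) = i) ∧
      ∀ v, 2 ≤ f v → f v < c.length → c.getVert (f v) = v := by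
  have h3 := hc.three_le_length
  have hswap : ∀ i, 2 ≤ i → Equiv.swap 0 1 i = i := fun i hi =>
    Equiv.swap_apply_of_ne_of_ne (by omega) (by omega)
  have hswap_lt : ∀ i < c.length, Equiv.swap 0 1 i < c.length := by
    intro i hi
    rcases (show i = 0 ∨ i = 1 ∨ 2 ≤ i by omega) with rfl | rfl | h
    · rw [Equiv.swap_apply_left]; omega
    · rw [Equiv.swap_apply_right]; omega
    · rwa [hswap i h]
  have hs : Set.InjOn (fun i => c.getVert (Equiv.swap 0 1 i)) (Set.Iio c.length) :=
    fun i hi j hj h => (Equiv.swap 0 1).injective <|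
      hc.getVert_injOn' (by simp only [Set.mem_ofPred_eq]; have := hswap_lt i hi; omega)
        (by simp only [Set.mem_ofPred_eq]; have := hswap_lt j hj; omega) h
  obtain ⟨f, hf, hfs, hsf⟩ := exists_injective_nat_of_injOn hs
  refine ⟨f, hf, by simpa using hfs 0 (by omega), by simpa using hfs 1 (by omega),
    fun i h2 hi => ?_, fun v h2 hv => ?_⟩
  · simpa [hswap i h2] using hfs i hi
  · simpa [hswap _ h2] using hsf v hv

end Numbering

section NotChordful

variable {V : Type*} {A : Set (V × V)} {f : V → ℕ} {x : V} {c : (undirectedGraph A).Walk x x}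

theorem adj_transRed_reorient_downArcs_getVert (hA : ∀ a ∈ A, a.1 ≠ a.2)
    (hc : c.IsCycle) (hk : 4 ≤ c.length) (hx : ∀ w, ¬ c.IsChord s(x, w))
    (hf : Function.Injective f) (hf₁ : f (c.getVert 1) = 0) (hf₀ : f x = 1)
    (hfi : ∀ i, 2 ≤ i → i < c.length → f (c.getVert i) = i)
    (hfinv : ∀ v, 2 ≤ f v → f v < c.length → c.getVert (f v) = v) {i : ℕ} (hi : i < c.length) :
    (undirectedGraph (transRed (reorient A (downArcs A f)))).Adj (c.getVert i)
      (c.getVert (i + 1)) := by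
  set E := reorient A (downArcs A f)
  have hE : ∀ u v, (u, v) ∈ E ↔ (undirectedGraph A).Adj u v ∧ f u < f v :=
    fun u v => mem_reorient_downArcs hA hf
  have hmono : ∀ u v, (u, v) ∈ E → f u < f v := fun u v h => ((hE u v).1 h).2
  have hfar := hc.not_adj_getVert_of_forall_not_isChord hx
  have hadj := c.adj_getVert_succ hi
  refine undirectedGraph_adj.2 ⟨hadj.ne, ?_⟩
  -- Edges other than `c₁c₂` and `x c_{k-1}` join consecutive numbers. A detour for `c₁ → c₂`
  -- must pass through `x` and then use the non-edge `x c₂`; one for `x → c_{k-1}` must start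
  -- with a non-edge `x cⱼ`, `2 ≤ j ≤ k - 2`.
  rcases (show i = 0 ∨ i = 1 ∨ (2 ≤ i ∧ i + 1 < c.length) ∨ i + 1 = c.length by omega) with
    rfl | rfl | ⟨h2, hi1⟩ | hik
  · simp only [zero_add, Walk.getVert_zero] at hadj ⊢
    refine .inr (mem_transRed_of_forall_out hmono ((hE _ _).2 ⟨hadj.symm, by omega⟩)
      fun w hw hlt => ?_)
    have := hmono _ _ hw; omega
  · simp only [Nat.reduceAdd] at hadj ⊢
    have hf₂ := hfi 2 le_rfl (by omega)
    refine .inl (mem_transRed_of_forall_in hmono ((hE _ _).2 ⟨hadj, by omega⟩) fun w hw hlt => ?_)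
    have hwx : w = x := hf (by have := hmono _ _ hw; omega)
    exact hfar le_rfl (by omega) (hwx ▸ ((hE _ _).1 hw).1)
  · have hfi' := hfi i h2 (by omega)
    have hfi₁ := hfi (i + 1) (by omega) hi1
    refine .inl (mem_transRed_of_forall_out hmono ((hE _ _).2 ⟨hadj, by omega⟩) fun w hw hlt => ?_)
    have := hmono _ _ hw; omega
  · rw [hik, Walk.getVert_length] at hadj ⊢
    have hfi' := hfi i (by omega) (by omega)
    refine .inr (mem_transRed_of_forall_out hmono ((hE _ _).2 ⟨hadj.symm, by omega⟩)
      fun w hw hlt => ?_)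
    have hxw := hmono _ _ hw
    refine hfar (j := f w) (by omega) (by omega) ?_
    rw [hfinv w (by omega) (by omega)]
    exact ((hE _ _).1 hw).1

theorem exists_armem_not_isForestArcs_of_isCycle [Fintype V] (hA : ∀ a ∈ A, a.1 ≠ a.2)
    (hc : c.IsCycle) (hk : 4 ≤ c.length) (hx : ∀ w, ¬ c.IsChord s(x, w)) :
    ∃ B, ARmem A B ∧ ¬ IsForestArcs (transRed (reorient A B)) := by
  obtain ⟨f, hf, hf₁, hf₀, hfi, hfinv⟩ := hc.exists_injective_nat_numbering
  refine ⟨downArcs A f, armem_downArcs hA hf, fun hforest => hforest _ (hc.transfer ?_)⟩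
  exact Walk.edges_subset_edgeSet_of_forall_adj_getVert fun i hi =>
    adj_transRed_reorient_downArcs_getVert hA hc hk hx hf hf₁ hf₀ hfi hfinv hi

theorem exists_armem_not_isForestArcs_of_not_chordful [Fintype V] (hA : ∀ a ∈ A, a.1 ≠ a.2)
    (hch : ¬ Chordful A) : ∃ B, ARmem A B ∧ ¬ IsForestArcs (transRed (reorient A B)) := by
  classical
  simp only [Chordful, not_forall] at hch
  obtain ⟨v, c, hc, x, hx, z, hz, hxz, hnot⟩ := hch
  have hnadj : ¬ (undirectedGraph A).Adj x z := fun h => hnot (undirectedGraph_adj.1 h).2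
  obtain ⟨y, d, hd, hk, hy⟩ := (hc.rotate hx).exists_isCycle_forall_not_isChord
    ((c.mem_support_rotate_iff x hx).2 hz) hxz.symm hnadj
  exact exists_armem_not_isForestArcs_of_isCycle hA hd hk hy

end NotChordful

/-- The transitive reduction of every acyclic reorientation of
`D` is a forest if and only if `D` is chordful. -/
theorem stmt_19 {V : Type*} [Fintype V] (A : Set (V × V)) (hA : IsDAG A) :
    (∀ B, ARmem A B → IsForestArcs (transRed (reorient A B))) ↔ Chordful A := by
  refine ⟨fun h => ?_, fun hch B hB => isForestArcs_transRed_of_chordful hch hB⟩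
  by_contra hch
  obtain ⟨B, hB, hB'⟩ := exists_armem_not_isForestArcs_of_not_chordful hA.1 hch
  exact hB' (h B hB)
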